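/- arXiv:2103.08292 — 3 statements merged into one kernel-verified Lean document; each statement's English description precedes it below -/
import Mathlib

section
/- Let m ≥ 1, B ∈ ℝ^{m×m} be positive semidefinite, C ∈ ℝ^{m×3}, and X ∈ ℝ^{m×3}. If the block matrix [[I₃, Xᵀ], [X, B]] ∈ ℝ^{(m+3)×(m+3)} is positive semidefinite, then tr(Cᵀ X) ≤ tr((Cᵀ B C)^{1/2}), where (Cᵀ B C)^{1/2} is the unique positive semidefinite square root of the positive semidefinite 3×3 matrix Cᵀ B C. -/
/-!
By the Schur complement, `B - X Xᵀ ⪰ 0`, so `A := Cᵀ B C` dominates `Nᵀ N` for `N := Xᵀ C`, whose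
trace is `tr (Cᵀ X)`. Conjugating by an orthogonal `U` that diagonalises `A` with eigenvalues `λᵢ`
turns this into `diag λ ⪰ Gᵀ G` for `G := Uᵀ N U`; its diagonal says `∑ⱼ G_{ji}² ≤ λᵢ`, hence
`G_{ii} ≤ √λᵢ`, and summing gives `tr N = tr G ≤ ∑ᵢ √λᵢ = tr A^{1/2}`.
-/

open Matrix

attribute [local instance] Classical.propDecidable

variable {ι : Type*} [Fintype ι] [DecidableEq ι]

/-- The unique positive semidefinite square root of a positive semidefinite real matrix
(junk value `0` if the matrix is not positive semidefinite). -/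
noncomputable def psqrt (M : Matrix ι ι ℝ) : Matrix ι ι ℝ :=
  if h : ∃ N : Matrix ι ι ℝ, N.PosSemidef ∧ N * N = M then h.choose else 0

open scoped MatrixOrder

namespace Matrix

variable {n : Type*} [Fintype n] [DecidableEq n]

lemma trace_cfc {𝕜 : Type*} [RCLike 𝕜] {A : Matrix n n 𝕜} (hA : A.IsHermitian) (f : ℝ → ℝ) :
    (cfc f A).trace = ∑ i, (f (hA.eigenvalues i) : 𝕜) := by
  rw [hA.cfc_eq, IsHermitian.cfc, Unitary.conjStarAlgAut_apply, trace_mul_cycle,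
    Unitary.coe_star_mul_self, one_mul, trace_diagonal]
  rfl

lemma trace_le_sum_sqrt_of_posSemidef_diagonal_sub {d : n → ℝ} {G : Matrix n n ℝ}
    (h : (diagonal d - Gᵀ * G).PosSemidef) : G.trace ≤ ∑ i, √(d i) := by
  refine Finset.sum_le_sum fun i _ => Real.le_sqrt_of_sq_le ?_
  have hcol : ∑ j, G j i ^ 2 ≤ d i := by
    simpa [mul_apply, pow_two] using h.diag_nonneg (i := i)
  exact (Finset.single_le_sum (f := fun j => G j i ^ 2) (fun j _ => sq_nonneg _)
    (Finset.mem_univ i)).trans hcol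

lemma trace_le_trace_cfcSqrt_of_posSemidef_sub {A N : Matrix n n ℝ} (hA : A.PosSemidef)
    (h : (A - Nᵀ * N).PosSemidef) : N.trace ≤ (CFC.sqrt A).trace := by
  set U : Matrix n n ℝ := ↑hA.1.eigenvectorUnitary
  have hUU : U * Uᵀ = 1 := Unitary.coe_mul_star_self _
  have hdiag : Uᵀ * A * U = diagonal hA.1.eigenvalues :=
    hA.1.conjStarAlgAut_star_eigenvectorUnitary
  have htrace : (Uᵀ * N * U).trace = N.trace := by
    rw [trace_mul_cycle, hUU, one_mul]
  have hconj : Uᵀ * (A - Nᵀ * N) * U =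
      diagonal hA.1.eigenvalues - (Uᵀ * N * U)ᵀ * (Uᵀ * N * U) := by
    rw [Matrix.mul_sub, Matrix.sub_mul, hdiag]
    simp only [transpose_mul, transpose_transpose, Matrix.mul_assoc, ← Matrix.mul_assoc U Uᵀ, hUU,
      Matrix.one_mul]
  rw [CFC.sqrt_eq_real_sqrt A hA.nonneg, cfcₙ_eq_cfc (hf0 := Real.sqrt_zero), trace_cfc hA.1,
    ← htrace]
  simp only [RCLike.ofReal_real_eq_id, id]
  apply trace_le_sum_sqrt_of_posSemidef_diagonal_sub
  rw [← hconj]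
  simpa using h.conjTranspose_mul_mul_same U

lemma posSemidef_sub_mul_transpose_of_fromBlocks_one {m k : Type*} [Fintype m] [Fintype k]
    [DecidableEq k] {X : Matrix m k ℝ} {B : Matrix m m ℝ}
    (h : (fromBlocks 1 Xᵀ X B).PosSemidef) : (B - X * Xᵀ).PosSemidef := by
  let := invertibleOne (α := Matrix k k ℝ)
  simpa using (PosDef.fromBlocks₁₁ Xᵀ B PosDef.one).mp (by simpa using h)

end Matrix

lemma psqrt_eq_cfcSqrt {M : Matrix ι ι ℝ} (hM : M.PosSemidef) : psqrt M = CFC.sqrt M := by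
  have hex : ∃ N : Matrix ι ι ℝ, N.PosSemidef ∧ N * N = M :=
    ⟨CFC.sqrt M, (CFC.sqrt_nonneg M).posSemidef, CFC.sqrt_mul_sqrt_self M hM.nonneg⟩
  rw [psqrt, dif_pos hex]
  exact (CFC.sqrt_unique hex.choose_spec.2 hex.choose_spec.1.nonneg).symm

theorem trace_le_trace_sqrt_general {m : ℕ}
    (B : Matrix (Fin m) (Fin m) ℝ) (hB : B.PosSemidef)
    (C X : Matrix (Fin m) (Fin 3) ℝ)
    (hY : (fromBlocks (1 : Matrix (Fin 3) (Fin 3) ℝ) Xᵀ X B).PosSemidef) :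
    (Cᵀ * X).trace ≤ (psqrt (Cᵀ * B * C)).trace := by
  have hCBC : (Cᵀ * B * C).PosSemidef := by
    simpa using hB.conjTranspose_mul_mul_same C
  have hgap : (Cᵀ * B * C - (Xᵀ * C)ᵀ * (Xᵀ * C)).PosSemidef := by
    have := (posSemidef_sub_mul_transpose_of_fromBlocks_one hY).conjTranspose_mul_mul_same C
    simpa [Matrix.mul_sub, Matrix.sub_mul, Matrix.mul_assoc] using this
  rw [psqrt_eq_cfcSqrt hCBC, ← trace_transpose, transpose_mul, transpose_transpose]
  exact trace_le_trace_cfcSqrt_of_posSemidef_sub hCBC hgap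

/-- If `B ⪰ 0` and `[[I₃, Xᵀ],[X, B]] ⪰ 0`, then `tr(Cᵀ X) ≤ tr((Cᵀ B C)^{1/2})`. -/
theorem trace_le_trace_sqrt {m : ℕ} (hm : 1 ≤ m)
    (B : Matrix (Fin m) (Fin m) ℝ) (hB : B.PosSemidef)
    (C X : Matrix (Fin m) (Fin 3) ℝ)
    (hY : (fromBlocks (1 : Matrix (Fin 3) (Fin 3) ℝ) Xᵀ X B).PosSemidef) :
    (Cᵀ * X).trace ≤ (psqrt (Cᵀ * B * C)).trace :=
  trace_le_trace_sqrt_general B hB C X hY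
end

section
/- Let m ≥ 1, B ∈ ℝ^{m×m} be positive semidefinite, and C ∈ ℝ^{m×3}. Define X* = B C ((Cᵀ B C)^{1/2})^†, where (·)^{1/2} is the positive semidefinite square root and (·)^† the Moore–Penrose pseudoinverse. Then the block matrix [[I₃, X*ᵀ], [X*, B]] is positive semidefinite and tr(Cᵀ X*) = tr((Cᵀ B C)^{1/2}); consequently X* maximizes tr(Cᵀ X) over all X ∈ ℝ^{m×3} for which [[I₃, Xᵀ], [X, B]] is positive semidefinite. -/
open Matrix

attribute [local instance] Classical.propDecidable

variable {ι : Type*} [Fintype ι] [DecidableEq ι]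

/-- The Moore–Penrose pseudoinverse of a square real matrix, characterized by the four
Penrose conditions (junk value `0` if no such matrix exists). -/
noncomputable def pinv (M : Matrix ι ι ℝ) : Matrix ι ι ℝ :=
  if h : ∃ N : Matrix ι ι ℝ,
      M * N * M = M ∧ N * M * N = N ∧ (M * N)ᵀ = M * N ∧ (N * M)ᵀ = N * M then
    h.choose
  else 0

/-!
Write `S = Cᵀ B C`, `R = S^{1/2}`, `P = R^†` and `X* = B C P`. By the Schur complement,
`[[I, Xᵀ], [X, B]] ⪰ 0` iff `X Xᵀ ⪯ B`.

Feasibility of `X*`: with `G = B^{1/2}` and `A = G C P` one has `Aᵀ A = P R² P = R P`, an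
orthogonal projection, so `A Aᵀ` is a projection as well and `B - X* X*ᵀ = G (I - A Aᵀ) G ⪰ 0`.
The value is `tr(Cᵀ B C P) = tr(R² P) = tr R`.

Optimality: for feasible `X` put `Y = Cᵀ X`, so that `Y Yᵀ ⪯ R²`. Compressing by `I - R P`
shows `(I - R P) Y = 0`, i.e. `Y` lives in the range of `R`. Pairing the positive semidefinite
matrix `(R - Y)(R - Y)ᵀ + (R² - Y Yᵀ) = 2R² - R Yᵀ - Y R` with `P ⪰ 0` in the trace then
gives `0 ≤ 2 tr R - 2 tr Y`.
-/

open scoped MatrixOrder ComplexOrder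

namespace Matrix

section MoorePenrose

variable {m n α : Type*} [Fintype m] [Fintype n] [CommSemiring α]

def IsMoorePenroseInverse (M : Matrix m n α) (N : Matrix n m α) : Prop :=
  M * N * M = M ∧ N * M * N = N ∧ (M * N)ᵀ = M * N ∧ (N * M)ᵀ = N * M

theorem IsMoorePenroseInverse.unique {M : Matrix m n α} {N N' : Matrix n m α}
    (h : IsMoorePenroseInverse M N) (h' : IsMoorePenroseInverse M N') : N = N' := by
  obtain ⟨h1, h2, h3, h4⟩ := h
  obtain ⟨h1', h2', h3', h4'⟩ := h'
  have hMN : M * N = M * N' :=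
    calc M * N = (M * N' * (M * N))ᵀ := by rw [← Matrix.mul_assoc (M * N'), h1', h3]
      _ = M * N * (M * N') := by rw [transpose_mul, h3, h3']
      _ = M * N' := by rw [← Matrix.mul_assoc, h1]
  have hNM : N * M = N' * M :=
    calc N * M = (N * M * (N' * M))ᵀ := by
          rw [Matrix.mul_assoc N M, ← Matrix.mul_assoc M, h1', h4]
      _ = N' * M * (N * M) := by rw [transpose_mul, h4, h4']
      _ = N' * M := by rw [Matrix.mul_assoc N', ← Matrix.mul_assoc M, h1]
  calc N = N * M * N := h2.symm
    _ = N' * M * N' := by rw [hNM, Matrix.mul_assoc, hMN, ← Matrix.mul_assoc]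
    _ = N' := h2'

end MoorePenrose

theorem isStarProjection_mul_conjTranspose_self {m n α : Type*} [Fintype m] [Fintype n]
    [Semiring α] [StarRing α] {A : Matrix m n α} (h : A * Aᴴ * A = A) :
    IsStarProjection (A * Aᴴ) where
  isIdempotentElem := by rw [IsIdempotentElem, ← Matrix.mul_assoc, h]
  isSelfAdjoint := isHermitian_mul_conjTranspose_self A

section RCLike

variable {m n 𝕜 : Type*} [Fintype m] [Fintype n] [RCLike 𝕜]

theorem PosSemidef.trace_mul_nonneg {A B : Matrix n n 𝕜} (hA : A.PosSemidef)
    (hB : B.PosSemidef) : 0 ≤ (A * B).trace := by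
  have hG : (CFC.sqrt A).PosSemidef := (CFC.sqrt_nonneg A).posSemidef
  have hGBG : (CFC.sqrt A * B * CFC.sqrt A).PosSemidef := by
    simpa only [hG.isHermitian.eq] using hB.mul_mul_conjTranspose_same (CFC.sqrt A)
  rw [← CFC.sqrt_mul_sqrt_self A hA.nonneg, Matrix.mul_assoc, trace_mul_comm]
  exact hGBG.trace_nonneg

theorem posSemidef_fromBlocks_one_iff [DecidableEq m] (X : Matrix n m 𝕜) (B : Matrix n n 𝕜) :
    (fromBlocks 1 Xᴴ X B).PosSemidef ↔ X * Xᴴ ≤ B := by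
  have : Invertible (1 : Matrix m m 𝕜) := invertibleOne
  simpa [Matrix.le_iff] using PosDef.fromBlocks₁₁ Xᴴ B (PosDef.one (n := m) (R := 𝕜))

theorem cfc_mul_cfc [DecidableEq n] (f g : ℝ → ℝ) (M : Matrix n n 𝕜) :
    cfc f M * cfc g M = cfc (fun x => f x * g x) M :=
  (cfc_mul f g M (M.finite_real_spectrum.continuousOn _)
    (M.finite_real_spectrum.continuousOn _)).symm

end RCLike

/-- The Penrose equations reduce to `x * x⁻¹ * x = x` and `x⁻¹ * x * x⁻¹ = x⁻¹` on the
spectrum, which hold for every real `x` because `0⁻¹ = 0`. -/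
theorem isMoorePenroseInverse_cfc_inv {n : Type*} [Fintype n] [DecidableEq n]
    {M : Matrix n n ℝ} (hM : M.IsHermitian) :
    IsMoorePenroseInverse M (cfc (·⁻¹ : ℝ → ℝ) M) := by
  have hMid : cfc id M = M := cfc_id ℝ M hM
  have hMN : M * cfc (·⁻¹ : ℝ → ℝ) M = cfc (fun x : ℝ => x * x⁻¹) M := by
    nth_rw 1 [← hMid]
    exact cfc_mul_cfc _ _ _
  have hNM : cfc (·⁻¹ : ℝ → ℝ) M * M = cfc (fun x : ℝ => x * x⁻¹) M := by
    nth_rw 2 [← hMid]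
    rw [cfc_mul_cfc]
    exact cfc_congr fun x _ => mul_comm _ _
  refine ⟨?_, ?_, ?_, ?_⟩
  · nth_rw 3 [← hMid]
    rw [hMN, cfc_mul_cfc]
    refine (cfc_congr fun x _ => ?_).trans hMid
    rcases eq_or_ne x 0 with rfl | hx <;> simp [*]
  · rw [hNM, cfc_mul_cfc]
    refine cfc_congr fun x _ => ?_
    rcases eq_or_ne x 0 with rfl | hx <;> simp [*]
  · rw [hMN]
    exact IsSymm.eq (cfc_predicate _ _)
  · rw [hNM]
    exact IsSymm.eq (cfc_predicate _ _)

end Matrix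

section Real

variable {m n : Type*} [Fintype m] [Fintype n]

theorem pinv_eq_of_isMoorePenroseInverse {M N : Matrix n n ℝ} (h : IsMoorePenroseInverse M N) :
    pinv M = N := by
  have hex : ∃ N, M * N * M = M ∧ N * M * N = N ∧ (M * N)ᵀ = M * N ∧ (N * M)ᵀ = N * M :=
    ⟨N, h⟩
  rw [pinv, dif_pos hex]
  exact IsMoorePenroseInverse.unique hex.choose_spec h

variable [DecidableEq n]

theorem psqrt_spec {M : Matrix n n ℝ} (hM : M.PosSemidef) :
    (psqrt M).PosSemidef ∧ psqrt M * psqrt M = M := by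
  have h : ∃ N : Matrix n n ℝ, N.PosSemidef ∧ N * N = M :=
    ⟨CFC.sqrt M, (CFC.sqrt_nonneg M).posSemidef, CFC.sqrt_mul_sqrt_self M hM.nonneg⟩
  rw [psqrt, dif_pos h]
  exact h.choose_spec

theorem pinv_eq_cfc_inv {M : Matrix n n ℝ} (hM : M.IsHermitian) :
    pinv M = cfc (·⁻¹ : ℝ → ℝ) M :=
  pinv_eq_of_isMoorePenroseInverse (isMoorePenroseInverse_cfc_inv hM)

theorem isMoorePenroseInverse_pinv {M : Matrix n n ℝ} (hM : M.IsHermitian) :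
    IsMoorePenroseInverse M (pinv M) :=
  pinv_eq_cfc_inv hM ▸ isMoorePenroseInverse_cfc_inv hM

theorem commute_pinv {M : Matrix n n ℝ} (hM : M.IsHermitian) : Commute M (pinv M) := by
  rw [pinv_eq_cfc_inv hM]
  nth_rw 1 [← cfc_id ℝ M hM]
  exact cfc_commute_cfc _ _ _

theorem transpose_pinv {M : Matrix n n ℝ} (hM : M.IsHermitian) : (pinv M)ᵀ = pinv M := by
  rw [pinv_eq_cfc_inv hM]
  exact IsSymm.eq (cfc_predicate _ _)

theorem Matrix.PosSemidef.pinv {M : Matrix n n ℝ} (hM : M.PosSemidef) : (pinv M).PosSemidef := by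
  rw [pinv_eq_cfc_inv hM.isHermitian, ← nonneg_iff_posSemidef]
  exact cfc_nonneg fun x hx => inv_nonneg.mpr (spectrum_nonneg_of_nonneg hM.nonneg hx)

theorem mul_pinv_mul_of_mul_transpose_le_mul_self {R Y : Matrix n n ℝ} (hR : R.IsHermitian)
    (hY : Y * Yᵀ ≤ R * R) : R * pinv R * Y = Y := by
  set E := 1 - R * pinv R
  have hER : E * R = 0 := by rw [sub_mul, (isMoorePenroseInverse_pinv hR).1, one_mul, sub_self]
  have hneg : E * (R * R - Y * Yᵀ) * Eᵀ = -((E * Y) * (E * Y)ᵀ) := by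
    rw [Matrix.mul_sub, ← Matrix.mul_assoc, hER, Matrix.zero_mul, zero_sub, Matrix.neg_mul,
      transpose_mul]
    simp only [Matrix.mul_assoc]
  have hEYY : (E * Y) * (E * Y)ᵀ = 0 := by
    refine le_antisymm ?_ (by simpa using (posSemidef_self_mul_conjTranspose (E * Y)).nonneg)
    rw [Matrix.le_iff, zero_sub, ← hneg]
    simpa using (Matrix.le_iff.mp hY).mul_mul_conjTranspose_same E
  have hEY : E * Y = 0 := self_mul_conjTranspose_eq_zero.mp (by simpa using hEYY)
  rwa [sub_mul, one_mul, sub_eq_zero, eq_comm] at hEY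

theorem trace_le_trace_of_mul_transpose_le_mul_self {R Y : Matrix n n ℝ} (hR : R.PosSemidef)
    (hY : Y * Yᵀ ≤ R * R) : Y.trace ≤ R.trace := by
  have hRPR := (isMoorePenroseInverse_pinv hR.isHermitian).1
  have hRPY := mul_pinv_mul_of_mul_transpose_le_mul_self hR.isHermitian hY
  have hPsym := transpose_pinv hR.isHermitian
  set P := pinv R
  have hRsym : Rᵀ = R := by simpa using hR.isHermitian.eq
  have hPYR : (P * (Y * R)).trace = Y.trace := by
    rw [← Matrix.mul_assoc, trace_mul_comm, ← Matrix.mul_assoc, hRPY]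
  have hPRY : (P * (R * Yᵀ)).trace = Y.trace := by
    rw [← trace_transpose, transpose_mul, transpose_mul, transpose_transpose, hRsym, hPsym,
      trace_mul_comm, hPYR]
  have hPRR : (P * (R * R)).trace = R.trace := by
    rw [trace_mul_comm, Matrix.mul_assoc, trace_mul_comm, hRPR]
  have hsq : ((R - Y) * (R - Y)ᵀ).PosSemidef := by
    simpa using posSemidef_self_mul_conjTranspose (R - Y)
  have hcert := hR.pinv.trace_mul_nonneg (hsq.add (Matrix.le_iff.mp hY))
  have hsum : (R - Y) * (R - Y)ᵀ + (R * R - Y * Yᵀ) = R * R + R * R - R * Yᵀ - Y * R := by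
    rw [transpose_sub, hRsym]
    noncomm_ring
  rw [hsum, Matrix.mul_sub, Matrix.mul_sub, Matrix.mul_add, trace_sub, trace_sub, trace_add, hPRR,
    hPRY, hPYR] at hcert
  linarith

theorem mul_transpose_le_of_mul_self_eq {B : Matrix m m ℝ} {C : Matrix m n ℝ}
    {R : Matrix n n ℝ} (hB : B.PosSemidef) (hR : R.IsHermitian) (hRR : R * R = Cᵀ * B * C) :
    (B * C * pinv R) * (B * C * pinv R)ᵀ ≤ B := by
  obtain ⟨hRPR, hPRP, -, -⟩ := isMoorePenroseInverse_pinv hR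
  have hPR := (commute_pinv hR).eq
  have hPsym := transpose_pinv hR
  set P := pinv R
  set G := CFC.sqrt B
  have hGG : G * G = B := CFC.sqrt_mul_sqrt_self B hB.nonneg
  have hGsym : Gᵀ = G := by simpa using (CFC.sqrt_nonneg B).posSemidef.isHermitian.eq
  set A := G * C * P
  have hAtA : Aᵀ * A = R * P :=
    calc Aᵀ * A = P * (Cᵀ * (G * G) * C) * P := by
          simp only [A, transpose_mul, hPsym, hGsym, Matrix.mul_assoc]
      _ = R * P * R * P := by rw [hGG, ← hRR, ← Matrix.mul_assoc, ← hPR]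
      _ = R * P := by rw [hRPR]
  have hA : A * Aᵀ * A = A := by
    rw [Matrix.mul_assoc, hAtA]
    simp only [A, Matrix.mul_assoc, ← Matrix.mul_assoc P R P, hPRP]
  have hproj : IsStarProjection (A * Aᵀ) := by
    simpa using isStarProjection_mul_conjTranspose_self (A := A) (by simpa using hA)
  have hBX : B - (B * C * P) * (B * C * P)ᵀ = G * (1 - A * Aᵀ) * Gᵀ := by
    rw [hGsym, Matrix.mul_sub, Matrix.sub_mul, Matrix.mul_one, hGG, ← hGG]
    simp only [A, transpose_mul, hGsym, Matrix.mul_assoc]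
  rw [Matrix.le_iff, hBX]
  simpa using (nonneg_iff_posSemidef.mp hproj.one_sub_nonneg).mul_mul_conjTranspose_same G

end Real

theorem Xstar_optimal_general {m : ℕ}
    (B : Matrix (Fin m) (Fin m) ℝ) (hB : B.PosSemidef)
    (C : Matrix (Fin m) (Fin 3) ℝ) :
    (fromBlocks (1 : Matrix (Fin 3) (Fin 3) ℝ) (B * C * pinv (psqrt (Cᵀ * B * C)))ᵀ
        (B * C * pinv (psqrt (Cᵀ * B * C))) B).PosSemidef ∧
    (Cᵀ * (B * C * pinv (psqrt (Cᵀ * B * C)))).trace = (psqrt (Cᵀ * B * C)).trace ∧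
    (∀ X : Matrix (Fin m) (Fin 3) ℝ,
      (fromBlocks (1 : Matrix (Fin 3) (Fin 3) ℝ) Xᵀ X B).PosSemidef →
      (Cᵀ * X).trace ≤ (Cᵀ * (B * C * pinv (psqrt (Cᵀ * B * C)))).trace) := by
  obtain ⟨hR, hRR⟩ := psqrt_spec (by simpa using hB.conjTranspose_mul_mul_same C)
  set R := psqrt (Cᵀ * B * C)
  have htrace : (Cᵀ * (B * C * pinv R)).trace = R.trace :=
    calc (Cᵀ * (B * C * pinv R)).trace = (R * R * pinv R).trace := by
          rw [hRR]; simp only [Matrix.mul_assoc]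
      _ = R.trace := by
          rw [Matrix.mul_assoc, trace_mul_comm, (isMoorePenroseInverse_pinv hR.isHermitian).1]
  refine ⟨?_, htrace, fun X hX => htrace ▸ ?_⟩
  · have h := mul_transpose_le_of_mul_self_eq hB hR.isHermitian hRR
    simp only [← conjTranspose_eq_transpose_of_trivial] at h ⊢
    exact (posSemidef_fromBlocks_one_iff _ B).2 h
  · have hXX : X * Xᵀ ≤ B := by
      simp only [← conjTranspose_eq_transpose_of_trivial] at hX ⊢
      exact (posSemidef_fromBlocks_one_iff X B).1 hX
    refine trace_le_trace_of_mul_transpose_le_mul_self hR ?_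
    have hYY : R * R - (Cᵀ * X) * (Cᵀ * X)ᵀ = Cᵀ * (B - X * Xᵀ) * C := by
      rw [hRR, Matrix.mul_sub, Matrix.sub_mul, transpose_mul, transpose_transpose]
      simp only [Matrix.mul_assoc]
    rw [Matrix.le_iff, hYY]
    simpa using (Matrix.le_iff.mp hXX).conjTranspose_mul_mul_same C

/-- With `B ⪰ 0` and `X* = B C ((Cᵀ B C)^{1/2})^†`, the matrix `[[I₃, X*ᵀ],[X*, B]]` is
positive semidefinite, `tr(Cᵀ X*) = tr((Cᵀ B C)^{1/2})`, and `X*` maximizes `tr(Cᵀ X)`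
over all `X` with `[[I₃, Xᵀ],[X, B]] ⪰ 0`. -/
theorem Xstar_optimal {m : ℕ} (hm : 1 ≤ m)
    (B : Matrix (Fin m) (Fin m) ℝ) (hB : B.PosSemidef)
    (C : Matrix (Fin m) (Fin 3) ℝ) :
    (fromBlocks (1 : Matrix (Fin 3) (Fin 3) ℝ) (B * C * pinv (psqrt (Cᵀ * B * C)))ᵀ
        (B * C * pinv (psqrt (Cᵀ * B * C))) B).PosSemidef ∧
    (Cᵀ * (B * C * pinv (psqrt (Cᵀ * B * C)))).trace = (psqrt (Cᵀ * B * C)).trace ∧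
    (∀ X : Matrix (Fin m) (Fin 3) ℝ,
      (fromBlocks (1 : Matrix (Fin 3) (Fin 3) ℝ) Xᵀ X B).PosSemidef →
      (Cᵀ * X).trace ≤ (Cᵀ * (B * C * pinv (psqrt (Cᵀ * B * C)))).trace) :=
  Xstar_optimal_general B hB C
end

section
/- Let Y ∈ ℝ^{3n×3n} be positive semidefinite with rank Y ≤ 3 and with every diagonal 3×3 block Y_{i,i} = I₃ for i = 1,…,n. Then there exists Q ∈ ℝ^{3n×3}, the column-stacking of 3×3 blocks Q₁,…,Qₙ, such that Y = Q Qᵀ and each Q_i is orthogonal (Q_i Q_iᵀ = I₃). -/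
open Matrix

/-- Column-stacking `[Q₁ᵀ ⋯ Qₙᵀ]ᵀ ∈ ℝ^{3n×3}` of 3×3 matrices. -/
def stack {n : ℕ} (Qs : Fin n → Matrix (Fin 3) (Fin 3) ℝ) :
    Matrix (Fin n × Fin 3) (Fin 3) ℝ :=
  fun p b => Qs p.1 p.2 b

/-- The `(i,j)`-th 3×3 block of a `3n×3n` matrix. -/
def blk {n : ℕ} (A : Matrix (Fin n × Fin 3) (Fin n × Fin 3) ℝ) (i j : Fin n) :
    Matrix (Fin 3) (Fin 3) ℝ :=
  fun a b => A (i, a) (j, b)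

/-!
A positive semidefinite matrix of rank at most `3` is a Gram matrix of vectors in `ℝ³`: keeping the
eigenvectors of the nonzero eigenvalues, scaled by `√λ`, gives `Y = Q Qᵀ` with `Q ∈ ℝ^{3n×3}`.
The `(i,i)` block of `Q Qᵀ` is `Qᵢ Qᵢᵀ`, so `Y_{i,i} = I₃` says exactly that each `Qᵢ` is orthogonal.
-/

open scoped ComplexOrder

namespace Matrix

variable {m n r α : Type*} [Fintype n]

theorem submatrix_subtype_mul_conjTranspose_of_col_eq_zero [NonUnitalNonAssocSemiring α]
    [StarRing α] (B : Matrix m n α) (p : n → Prop) [DecidablePred p]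
    (hB : ∀ i j, ¬p j → B i j = 0) :
    B.submatrix id (Subtype.val : Subtype p → n) * (B.submatrix id (Subtype.val : Subtype p → n))ᴴ =
      B * Bᴴ := by
  refine Matrix.ext fun i k => ?_
  simp only [mul_apply, submatrix_apply, conjTranspose_apply, id]
  have hzero : ∑ j : {j // ¬p j}, B i j * star (B k j) = 0 :=
    Finset.sum_eq_zero fun j _ => by rw [hB i j j.2, zero_mul]
  rw [← Fintype.sum_subtype_add_sum_subtype p, hzero, add_zero]

theorem exists_mul_conjTranspose_eq_of_card_le [Fintype r] [DecidableEq r] [Semiring α]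
    [StarRing α] (W : Matrix m n α) (h : Fintype.card n ≤ Fintype.card r) :
    ∃ Q : Matrix m r α, W * Wᴴ = Q * Qᴴ := by
  classical
  obtain ⟨e⟩ := Function.Embedding.nonempty_of_card_le h
  have hE : (1 : Matrix r r α).submatrix e id * ((1 : Matrix r r α).submatrix e id)ᴴ = 1 := by
    rw [conjTranspose_submatrix, conjTranspose_one, ← submatrix_mul _ _ _ _ _ Function.bijective_id,
      Matrix.mul_one, submatrix_one_embedding]
  refine ⟨W * (1 : Matrix r r α).submatrix e id, ?_⟩
  rw [conjTranspose_mul, Matrix.mul_assoc, ← Matrix.mul_assoc _ _ Wᴴ, hE, Matrix.one_mul]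

namespace PosSemidef

variable {𝕜 : Type*} [RCLike 𝕜] [Fintype m] [DecidableEq m] {A : Matrix m m 𝕜}

theorem exists_eq_mul_conjTranspose_nonzero_eigenvalues (hA : A.PosSemidef) :
    ∃ W : Matrix m {k // hA.1.eigenvalues k ≠ 0} 𝕜, A = W * Wᴴ := by
  set μ := hA.1.eigenvalues
  set U : Matrix m m 𝕜 := (hA.1.eigenvectorUnitary : Matrix m m 𝕜)
  set D : Matrix m m 𝕜 := diagonal fun k => (√(μ k) : 𝕜)
  set B := U * D
  have hD : D * Dᴴ = diagonal (RCLike.ofReal ∘ μ) := by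
    rw [diagonal_conjTranspose, diagonal_mul_diagonal]
    congr 1 with k
    rw [Pi.star_apply, RCLike.star_def, RCLike.conj_ofReal, ← RCLike.ofReal_mul,
      Real.mul_self_sqrt (hA.eigenvalues_nonneg k), Function.comp_apply]
  have hA_eq : A = B * Bᴴ := by
    rw [conjTranspose_mul, Matrix.mul_assoc, ← Matrix.mul_assoc D, hD, ← Matrix.mul_assoc]
    exact hA.1.spectral_theorem
  have hB : ∀ i k, ¬μ k ≠ 0 → B i k = 0 := fun i k hk => by
    simp only [B, D, mul_diagonal, not_not.mp hk, Real.sqrt_zero, RCLike.ofReal_zero, mul_zero]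
  exact ⟨B.submatrix id Subtype.val,
    hA_eq.trans (submatrix_subtype_mul_conjTranspose_of_col_eq_zero B _ hB).symm⟩

theorem exists_eq_mul_conjTranspose_of_rank_le {r : Type*} [Fintype r] [DecidableEq r]
    (hA : A.PosSemidef) (hrank : A.rank ≤ Fintype.card r) :
    ∃ Q : Matrix m r 𝕜, A = Q * Qᴴ := by
  obtain ⟨W, hW⟩ := hA.exists_eq_mul_conjTranspose_nonzero_eigenvalues
  obtain ⟨Q, hQ⟩ := exists_mul_conjTranspose_eq_of_card_le W
    (hA.1.rank_eq_card_non_zero_eigs ▸ hrank)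
  exact ⟨Q, hW.trans hQ⟩

end PosSemidef

end Matrix

theorem blk_stack_mul_transpose {n : ℕ} (Qs : Fin n → Matrix (Fin 3) (Fin 3) ℝ) (i j : Fin n) :
    blk (stack Qs * (stack Qs)ᵀ) i j = Qs i * (Qs j)ᵀ :=
  rfl

/-- A positive semidefinite `Y ∈ ℝ^{3n×3n}` of rank at most 3 whose diagonal 3×3 blocks
all equal `I₃` factorizes as `Y = Q Qᵀ` where `Q` is the column-stacking of orthogonal
3×3 matrices `Q₁,…,Qₙ`. -/
theorem rank3_factorization {n : ℕ}
    (Y : Matrix (Fin n × Fin 3) (Fin n × Fin 3) ℝ)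
    (hY : Y.PosSemidef) (hrank : Y.rank ≤ 3)
    (hdiag : ∀ i : Fin n, blk Y i i = 1) :
    ∃ Qs : Fin n → Matrix (Fin 3) (Fin 3) ℝ,
      Y = stack Qs * (stack Qs)ᵀ ∧ ∀ i, Qs i * (Qs i)ᵀ = 1 := by
  obtain ⟨Q, hQ⟩ := hY.exists_eq_mul_conjTranspose_of_rank_le (r := Fin 3)
    (hrank.trans_eq (Fintype.card_fin 3).symm)
  rw [conjTranspose_eq_transpose_of_trivial] at hQ
  let Qs : Fin n → Matrix (Fin 3) (Fin 3) ℝ := fun i a b => Q (i, a) b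
  have hstack : stack Qs = Q := rfl
  refine ⟨Qs, hstack ▸ hQ, fun i => ?_⟩
  rw [← hdiag i, hQ, ← hstack, blk_stack_mul_transpose]
end
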